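/- arXiv:1108.4671 — 2 statements merged into one kernel-verified Lean document; each statement's English description precedes it below -/
import Mathlib

section
/- The pure braid group of two points on the 2-sphere is trivial; that is, the fundamental group of the ordered configuration space F_2(S^2) of two distinct points in S^2 is the trivial group. -/
open Metric

/-- The 2-sphere as the unit sphere in `ℝ³`. -/
noncomputable abbrev Sphere2 : Type := Metric.sphere (0 : EuclideanSpace ℝ (Fin 3)) 1

/-- The ordered configuration space of two distinct points on the 2-sphere. -/
abbrev OrderedConfig2Sphere : Type := {p : Sphere2 × Sphere2 // p.1 ≠ p.2}

/-!
Forgetting the second point is a homotopy equivalence `F₂(S²) ≃ S²`, with homotopy inverse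
`x ↦ (x, -x)`: the deformation pushes `y` along the great-circle arc towards `-x`, which never
passes through `x`. So it suffices that `S²` is simply connected. A loop is uniformly close to a
piecewise-linear interpolation of it; after radial projection the two loops are never antipodal,
hence homotopic through normalized straight segments. The projected polygon lies in finitely many
planes through the origin, so it misses a point of the sphere, and the complement of a point is
contractible by stereographic projection.
-/

open Set NormedSpace AffineMap unitInterval
open scoped ContinuousMap

section NormedSpace

variable {E : Type*} [NormedAddCommGroup E] [NormedSpace ℝ E] {X : Type*} [TopologicalSpace X]

theorem normalize_mem_sphere {x : E} (hx : x ≠ 0) : normalize x ∈ sphere (0 : E) 1 := by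
  simpa using norm_normalize_eq_one_iff.2 hx

theorem Continuous.normalize {f : X → E} (hf : Continuous f) (h0 : ∀ x, f x ≠ 0) :
    Continuous fun x ↦ normalize (f x) :=
  (hf.norm.inv₀ fun x ↦ norm_ne_zero_iff.2 (h0 x)).smul hf

theorem normalize_ne_neg_of_norm_sub_lt_one {v w : E} (hv : ‖v‖ = 1) (hw : ‖w - v‖ < 1) :
    normalize w ≠ -v := by
  intro h
  have hw' : w - v = -((‖w‖ + 1) • v) := by
    conv_lhs => rw [← norm_smul_normalize w, h]
    rw [add_smul, one_smul, smul_neg]; abel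
  rw [hw', norm_neg, norm_smul, hv, mul_one, Real.norm_of_nonneg (by positivity)] at hw
  linarith [norm_nonneg w]

theorem lineMap_ne_zero_of_ne_neg {a b : sphere (0 : E) 1} (hab : a ≠ -b) {s : ℝ}
    (hs : s ∈ Icc (0 : ℝ) 1) : lineMap (a : E) b s ≠ 0 := by
  intro h
  have hmem := lineMap_mem_segment (𝕜 := ℝ) (a : E) b hs
  rw [h, mem_segment_iff_sameRay, zero_sub, sub_zero] at hmem
  refine hab (Subtype.ext ?_)
  rw [coe_neg_sphere, ← hmem.eq_of_norm_eq (by simp), neg_neg]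

theorem normalize_lineMap_neg_ne {a b : sphere (0 : E) 1} (hab : a ≠ b) {s : ℝ}
    (hs : s ∈ Icc (0 : ℝ) 1) : normalize (lineMap (b : E) (-a : E) s) ≠ a := by
  have hc0 : lineMap (b : E) (-a : E) s ≠ 0 := by
    rw [← coe_neg_sphere]; exact lineMap_ne_zero_of_ne_neg (by rwa [neg_neg, ne_comm]) hs
  generalize hc : lineMap (b : E) (-a : E) s = c at hc0
  intro h
  have hba : (1 - s) • (b : E) = (‖c‖ + s) • (a : E) := by
    have hca : c = ‖c‖ • (a : E) := by rw [← h, norm_smul_normalize]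
    rw [add_smul, ← hca, ← hc, lineMap_apply_module, smul_neg]; abel
  have hcoeff : 1 - s = ‖c‖ + s := by
    simpa [norm_smul, abs_of_nonneg (sub_nonneg.2 hs.2),
      abs_of_nonneg (add_nonneg (norm_nonneg c) hs.1)] using congrArg norm hba
  have hs1 : 1 - s ≠ 0 := by linarith [norm_pos_iff.2 hc0, hs.1]
  rw [← hcoeff] at hba
  exact hab (Subtype.ext (smul_right_injective E hs1 hba).symm)

noncomputable def ContinuousMap.HomotopyRel.normalizeAffine (f g : C(X, sphere (0 : E) 1))
    (h : ∀ x, f x ≠ -g x) : f.HomotopyRel g {x | f x = g x} where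
  toFun st := ⟨normalize (lineMap (f st.2 : E) (g st.2) (st.1 : ℝ)),
    normalize_mem_sphere (lineMap_ne_zero_of_ne_neg (h st.2) st.1.2)⟩
  continuous_toFun := by
    have hc : Continuous fun st : I × X ↦ lineMap (f st.2 : E) (g st.2) (st.1 : ℝ) := by
      fun_prop
    exact (hc.normalize fun st ↦ lineMap_ne_zero_of_ne_neg (h st.2) st.1.2).subtype_mk _
  map_zero_left x := Subtype.ext (by simp [normalize_eq_self_of_norm_eq_one])
  map_one_left x := Subtype.ext (by simp [normalize_eq_self_of_norm_eq_one])
  prop' s x hx := Subtype.ext (by simp [hx.out, normalize_eq_self_of_norm_eq_one])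

theorem ContinuousMap.HomotopyRel.coe_normalizeAffine_apply (f g : C(X, sphere (0 : E) 1))
    (h : ∀ x, f x ≠ -g x) (st : I × X) :
    (normalizeAffine f g h st : E) = normalize (lineMap (f st.2 : E) (g st.2) (st.1 : ℝ)) :=
  rfl

theorem Path.homotopic_of_forall_ne_neg {x y : sphere (0 : E) 1} {p q : Path x y}
    (h : ∀ t, p t ≠ -q t) : p.Homotopic q :=
  let F := ContinuousMap.HomotopyRel.normalizeAffine p.toContinuousMap q.toContinuousMap h
  ⟨{ F with prop' := fun t s hs ↦ F.prop t s (by rcases hs with rfl | rfl <;> simp) }⟩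

noncomputable def sphereDistinctPairsHomotopyEquiv :
    {p : sphere (0 : E) 1 × sphere (0 : E) 1 // p.1 ≠ p.2} ≃ₕ sphere (0 : E) 1 where
  toFun := ⟨fun z ↦ z.1.1, by fun_prop⟩
  invFun := ⟨fun y ↦ ⟨(y, -y), ne_neg_of_mem_unit_sphere ℝ y⟩, by fun_prop⟩
  left_inv := by
    let F := ContinuousMap.HomotopyRel.normalizeAffine
      (⟨fun z ↦ z.1.2, by fun_prop⟩ : C({p : sphere (0 : E) 1 × sphere (0 : E) 1 // p.1 ≠ p.2}, _))
      ⟨fun z ↦ -z.1.1, by fun_prop⟩ (fun z h ↦ z.2 (by simpa using h.symm))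
    refine .symm ⟨{
      toFun sz := ⟨(sz.2.1.1, F sz), fun h ↦ ?_⟩
      continuous_toFun := by fun_prop
      map_zero_left z := by ext <;> simp
      map_one_left z := by ext <;> simp }⟩
    rw [Subtype.ext_iff, ContinuousMap.HomotopyRel.coe_normalizeAffine_apply] at h
    exact normalize_lineMap_neg_ne sz.2.2 sz.1.2 h.symm
  right_inv := ContinuousMap.Homotopic.refl _

/-- The piecewise-linear map through `q 0, q 1, …, q N` at the times `0, 1/N, …, 1`, written as a
sum of clamped ramps so that it is visibly continuous. -/
noncomputable def piecewiseLinear (N : ℕ) (q : ℕ → E) (t : ℝ) : E :=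
  q 0 + ∑ i ∈ Finset.range N, (projIcc (0 : ℝ) 1 zero_le_one (N * t - i) : ℝ) • (q (i + 1) - q i)

theorem continuous_piecewiseLinear (N : ℕ) (q : ℕ → E) : Continuous (piecewiseLinear N q) := by
  unfold piecewiseLinear
  fun_prop

theorem piecewiseLinear_eq_lineMap {N j : ℕ} (q : ℕ → E) (hj : j < N) {t : ℝ}
    (h₁ : j ≤ N * t) (h₂ : N * t ≤ j + 1) :
    piecewiseLinear N q t = lineMap (q j) (q (j + 1)) ((N : ℝ) * t - j) := by
  have below : ∀ i ∈ Finset.range j,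
      (projIcc (0 : ℝ) 1 zero_le_one (N * t - i) : ℝ) • (q (i + 1) - q i) = q (i + 1) - q i := by
    intro i hi
    have : (i : ℝ) + 1 ≤ j := by exact_mod_cast Finset.mem_range.1 hi
    rw [projIcc_of_right_le _ (by linarith), one_smul]
  have above : ∀ i ∈ Finset.Ico (j + 1) N,
      (projIcc (0 : ℝ) 1 zero_le_one (N * t - i) : ℝ) • (q (i + 1) - q i) = 0 := by
    intro i hi
    have : (j : ℝ) + 1 ≤ i := by exact_mod_cast (Finset.mem_Ico.1 hi).1
    rw [projIcc_of_le_left _ (by linarith), zero_smul]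
  rw [piecewiseLinear, ← Finset.sum_range_add_sum_Ico _ hj, Finset.sum_range_succ,
    Finset.sum_congr rfl below, Finset.sum_congr rfl above, Finset.sum_range_sub,
    projIcc_of_mem _ ⟨by linarith, by linarith⟩, Finset.sum_const_zero, lineMap_apply_module']
  abel

theorem piecewiseLinear_zero (N : ℕ) (q : ℕ → E) : piecewiseLinear N q 0 = q 0 := by
  simp [piecewiseLinear, projIcc_of_le_left]

theorem piecewiseLinear_one {N : ℕ} (hN : 0 < N) (q : ℕ → E) : piecewiseLinear N q 1 = q N := by
  have h := piecewiseLinear_eq_lineMap q (Nat.sub_lt hN one_pos) (t := 1)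
    (by simp [Nat.cast_pred hN]) (by simp [Nat.cast_pred hN])
  rwa [Nat.sub_one_add_one hN.ne', Nat.cast_pred hN, mul_one, sub_sub_cancel,
    lineMap_apply_one] at h

theorem exists_lt_le_mul_le_add_one {N : ℕ} (hN : 0 < N) {t : ℝ} (ht : t ∈ Icc (0 : ℝ) 1) :
    ∃ j < N, (j : ℝ) ≤ N * t ∧ N * t ≤ j + 1 := by
  have hNt : 0 ≤ (N : ℝ) * t := mul_nonneg N.cast_nonneg ht.1
  rcases ht.2.lt_or_eq with ht1 | rfl
  · refine ⟨⌊(N : ℝ) * t⌋₊, ?_, Nat.floor_le hNt, (Nat.lt_floor_add_one _).le⟩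
    exact Nat.floor_lt hNt |>.2 (by nlinarith [(Nat.cast_pos.2 hN : (0 : ℝ) < N)])
  · exact ⟨N - 1, Nat.sub_lt hN one_pos, by simp [Nat.cast_pred hN], by simp [Nat.cast_pred hN]⟩

theorem exists_forall_norm_piecewiseLinear_sub_lt {f : ℝ → E} (hf : ContinuousOn f (Icc 0 1))
    {ε : ℝ} (hε : 0 < ε) :
    ∃ N : ℕ, 0 < N ∧ ∀ t ∈ Icc (0 : ℝ) 1, ‖piecewiseLinear N (fun i ↦ f (i / N)) t - f t‖ < ε := by
  obtain ⟨δ, hδ, hfδ⟩ := Metric.uniformContinuousOn_iff.1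
    (isCompact_Icc.uniformContinuousOn_of_continuous hf) ε hε
  obtain ⟨n, hn⟩ := exists_nat_one_div_lt hδ
  set N := n + 1
  have hN : (0 : ℝ) < N := by positivity
  have hNδ : 1 / (N : ℝ) < δ := by simpa [N] using hn
  refine ⟨N, n.succ_pos, fun t ht ↦ ?_⟩
  obtain ⟨j, hj, h₁, h₂⟩ := exists_lt_le_mul_le_add_one n.succ_pos ht
  have node_mem : ∀ i : ℕ, (i : ℝ) ≤ N → |(i : ℝ) - N * t| ≤ 1 → f (i / N) ∈ ball (f t) ε := by
    intro i hiN hit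
    refine hfδ _ ⟨by positivity, (div_le_one hN).2 hiN⟩ _ ht (lt_of_le_of_lt ?_ hNδ)
    rw [Real.dist_eq, show (i : ℝ) / N - t = (i - N * t) / N by field_simp, abs_div, abs_of_pos hN]
    gcongr
  have hjN : (j : ℝ) + 1 ≤ N := by exact_mod_cast hj
  rw [← dist_eq_norm, ← mem_ball, piecewiseLinear_eq_lineMap _ hj h₁ h₂]
  refine (convex_ball (f t) ε).lineMap_mem (node_mem j (by linarith) ?_)
    (node_mem (j + 1) (by push_cast; linarith) ?_) ⟨by linarith, by linarith⟩ <;>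
  · push_cast
    rw [abs_le]
    constructor <;> linarith

theorem normalize_mem_submodule_iff {p : Submodule ℝ E} {x : E} : normalize x ∈ p ↔ x ∈ p :=
  ⟨fun h ↦ norm_smul_normalize x ▸ p.smul_mem _ h, p.smul_mem _⟩

theorem exists_mem_sphere_forall_notMem_span_pair {ι : Type*} [Finite ι] [Nonempty ι]
    (hE : 3 ≤ Module.rank ℝ E) (a b : ι → E) :
    ∃ p ∈ sphere (0 : E) 1, ∀ i, p ∉ Submodule.span ℝ {a i, b i} := by
  have hne : ∀ i, Submodule.span ℝ {a i, b i} ≠ ⊤ := by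
    intro i htop
    have h := (rank_span_le (R := ℝ) ({a i, b i} : Set E)).trans Cardinal.mk_insert_le
    rw [htop, rank_top, Cardinal.mk_singleton] at h
    have := hE.trans h
    norm_num at this
  obtain ⟨v, hv⟩ : ∃ v, v ∉ ⋃ i, (Submodule.span ℝ {a i, b i} : Set E) := by
    by_contra! h
    obtain ⟨i, hi⟩ := Subspace.exists_eq_top_of_iUnion_eq_univ (eq_univ_of_forall h)
    exact hne i hi
  simp only [mem_iUnion, SetLike.mem_coe, not_exists] at hv
  have hv0 : v ≠ 0 := fun h ↦ hv (Classical.arbitrary ι) (h ▸ Submodule.zero_mem _)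
  exact ⟨normalize v, normalize_mem_sphere hv0, fun i ↦ normalize_mem_submodule_iff.not.2 (hv i)⟩

theorem lineMap_mem_span_pair (a b : E) (s : ℝ) : lineMap a b s ∈ Submodule.span ℝ {a, b} := by
  rw [lineMap_apply_module]
  exact add_mem (Submodule.smul_mem _ _ (Submodule.subset_span (by simp)))
    (Submodule.smul_mem _ _ (Submodule.subset_span (by simp)))

theorem Path.exists_homotopic_forall_ne {x y : sphere (0 : E) 1} (hE : 3 ≤ Module.rank ℝ E)
    (γ : Path x y) : ∃ (γ' : Path x y) (p : sphere (0 : E) 1), γ.Homotopic γ' ∧ ∀ t, γ' t ≠ p := by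
  set f : ℝ → E := fun t ↦ γ.extend t
  obtain ⟨N, hN, hclose⟩ := exists_forall_norm_piecewiseLinear_sub_lt
    (continuous_subtype_val.comp γ.continuous_extend).continuousOn one_pos (f := f)
  set P := piecewiseLinear N fun i ↦ f (i / N)
  have hPγ (t : I) : ‖P t - γ t‖ < 1 := by simpa [f] using hclose t t.2
  have hP0 (t : I) : P t ≠ 0 := fun h ↦ by simpa [h] using hPγ t
  let γ' : Path x y :=
    { toFun t := ⟨normalize (P t), normalize_mem_sphere (hP0 t)⟩
      continuous_toFun :=
        (((continuous_piecewiseLinear _ _).comp continuous_subtype_val).normalize hP0).subtype_mk _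
      source' := Subtype.ext <| by
        simp [P, f, piecewiseLinear_zero, normalize_eq_self_of_norm_eq_one]
      target' := Subtype.ext <| by
        simp [P, f, piecewiseLinear_one hN, hN.ne', normalize_eq_self_of_norm_eq_one] }
  have hP_mem (t : I) : ∃ j : Fin N, P t ∈ Submodule.span ℝ {f (j / N), f ((j + 1 : ℕ) / N)} := by
    obtain ⟨j, hj, h₁, h₂⟩ := exists_lt_le_mul_le_add_one hN t.2
    refine ⟨⟨j, hj⟩, ?_⟩
    rw [show P t = _ from piecewiseLinear_eq_lineMap _ hj h₁ h₂]
    exact lineMap_mem_span_pair _ _ _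
  have : Nonempty (Fin N) := ⟨⟨0, hN⟩⟩
  obtain ⟨p, hp, hpW⟩ := exists_mem_sphere_forall_notMem_span_pair hE
    (fun j : Fin N ↦ f (j / N)) (fun j ↦ f ((j + 1 : ℕ) / N))
  refine ⟨γ', ⟨p, hp⟩, Path.homotopic_of_forall_ne_neg fun t h ↦ ?_, fun t h ↦ ?_⟩
  · refine normalize_ne_neg_of_norm_sub_lt_one (norm_eq_of_mem_sphere (γ t)) (hPγ t) ?_
    rw [← coe_neg_sphere, h, neg_neg]
    rfl
  · obtain ⟨j, hj⟩ := hP_mem t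
    have hPp : normalize (P t) = p := congrArg Subtype.val h
    exact hpW j (hPp ▸ normalize_mem_submodule_iff.2 hj)

end NormedSpace

section InnerProductSpace

variable {E : Type*} [NormedAddCommGroup E] [InnerProductSpace ℝ E]

theorem isSimplyConnected_sphere_compl_singleton (p : sphere (0 : E) 1) :
    IsSimplyConnected ({p}ᶜ : Set (sphere (0 : E) 1)) :=
  ((stereographic (norm_eq_of_mem_sphere p)).toHomeomorphSourceTarget.trans
    (Homeomorph.Set.univ _)).toHomotopyEquiv.simplyConnectedSpace

theorem simplyConnectedSpace_sphere (hE : 3 ≤ Module.rank ℝ E) :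
    SimplyConnectedSpace (sphere (0 : E) 1) := by
  have : PathConnectedSpace (sphere (0 : E) 1) := isPathConnected_iff_pathConnectedSpace.1 <|
    isPathConnected_sphere (lt_of_lt_of_le (by norm_num) hE) 0 zero_le_one
  refine simply_connected_iff_loops_nullhomotopic.2 ⟨this, fun x γ ↦ ?_⟩
  obtain ⟨γ', p, hγγ', hγ'p⟩ := γ.exists_homotopic_forall_ne hE
  obtain ⟨F, -⟩ := (isSimplyConnected_iff_exists_homotopy_refl_forall_mem.1
    (isSimplyConnected_sphere_compl_singleton p)).2 x γ' hγ'p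
  exact hγγ'.trans ⟨F⟩

end InnerProductSpace

/-- The pure braid group of two points in `S²` is trivial: the fundamental group of the
ordered configuration space `F₂(S²)` is the trivial group (at any basepoint). -/
theorem pureBraidGroup_two_sphere_trivial (x : OrderedConfig2Sphere) :
    Subsingleton (FundamentalGroup OrderedConfig2Sphere x) := by
  have : SimplyConnectedSpace Sphere2 := simplyConnectedSpace_sphere <| by
    rw [← Module.finrank_eq_rank, finrank_euclideanSpace_fin]; rfl
  have : SimplyConnectedSpace OrderedConfig2Sphere :=
    sphereDistinctPairsHomotopyEquiv.simplyConnectedSpace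
  infer_instance
end

section
/- Let A be a real n×n matrix such that A_τ = (1−τ)I + τA is invertible for all τ ∈ [0,1], let κ₁ ≤ 1/sup_τ ‖A_τ^{-1}‖ and κ₂ ≤ 1/‖A−I‖ with κ₁, κ₂ > 0, and let 0 ≤ κ < κ₁κ₂. Then for all nonzero y, z ∈ R^n and all τ ∈ [0,1], the vector A_τ z + κ·(‖z‖/‖y‖)·(A−I)y is nonzero. -/
set_option maxHeartbeats 1000000 in
/-- Key nondegeneracy estimate: with `A_τ = (1−τ)I + τA` invertible for all `τ ∈ [0,1]`,
`κ₁ ≤ 1/sup_τ ‖A_τ⁻¹‖`, `κ₂ ≤ 1/‖A−I‖`, `κ₁, κ₂ > 0`, and `0 ≤ κ < κ₁κ₂`, for all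
nonzero `y, z` and all `τ ∈ [0,1]` the vector `A_τ z + κ (‖z‖/‖y‖) (A−I) y` is nonzero. -/
theorem matrix_interpolation_nondegenerate {n : ℕ}
    (A : EuclideanSpace ℝ (Fin n) →L[ℝ] EuclideanSpace ℝ (Fin n))
    (B : ℝ → (EuclideanSpace ℝ (Fin n) →L[ℝ] EuclideanSpace ℝ (Fin n)))
    (hB : ∀ τ ∈ Set.Icc (0 : ℝ) 1,
      ((1 - τ) • (1 : EuclideanSpace ℝ (Fin n) →L[ℝ] EuclideanSpace ℝ (Fin n)) + τ • A).comp (B τ) = 1 ∧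
      (B τ).comp ((1 - τ) • (1 : EuclideanSpace ℝ (Fin n) →L[ℝ] EuclideanSpace ℝ (Fin n)) + τ • A) = 1)
    (hAne : A ≠ 1)
    (κ₁ κ₂ κ : ℝ) (hκ₁pos : 0 < κ₁) (hκ₂pos : 0 < κ₂)
    (hκ₁ : κ₁ ≤ 1 / ⨆ τ : Set.Icc (0 : ℝ) 1, ‖B τ‖)
    (hκ₂ : κ₂ ≤ 1 / ‖A - 1‖)
    (hκ0 : 0 ≤ κ) (hκ : κ < κ₁ * κ₂) :
    ∀ τ ∈ Set.Icc (0 : ℝ) 1, ∀ y z : EuclideanSpace ℝ (Fin n), y ≠ 0 → z ≠ 0 →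
      ((1 - τ) • (1 : EuclideanSpace ℝ (Fin n) →L[ℝ] EuclideanSpace ℝ (Fin n)) + τ • A) z
        + (κ * (‖z‖ / ‖y‖)) • ((A - 1) y) ≠ 0 := by
  intro τ hτ y z hy hz h
  set T := ((1 - τ) • (1 : EuclideanSpace ℝ (Fin n) →L[ℝ] EuclideanSpace ℝ (Fin n)) + τ • A) with hT
  -- the sup is positive
  set S := ⨆ τ : Set.Icc (0 : ℝ) 1, ‖B τ‖ with hSdef
  have hS : 0 < S := by
    by_contra hle
    push_neg at hle
    have : (1 : ℝ) / S ≤ 0 := one_div_nonpos.mpr hle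
    linarith
  have hbdd : BddAbove (Set.range fun τ : Set.Icc (0 : ℝ) 1 => ‖B τ‖) := by
    by_contra hb
    have := Real.iSup_of_not_bddAbove hb
    rw [← hSdef] at this
    linarith
  have hBle : ‖B τ‖ ≤ S := le_ciSup hbdd ⟨τ, hτ⟩
  have hκ₁S : κ₁ * S ≤ 1 := (le_div_iff₀ hS).mp hκ₁
  have hA1 : (0 : ℝ) < ‖A - 1‖ := by
    rw [norm_pos_iff]
    exact sub_ne_zero.mpr hAne
  have hκ₂A : κ₂ * ‖A - 1‖ ≤ 1 := (le_div_iff₀ hA1).mp hκ₂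
  have hzpos : (0 : ℝ) < ‖z‖ := norm_pos_iff.mpr hz
  have hypos : (0 : ℝ) < ‖y‖ := norm_pos_iff.mpr hy
  -- z = B τ (T z)
  have hzeq : B τ (T z) = z := by
    have := (hB τ hτ).2
    calc B τ (T z) = ((B τ).comp T) z := rfl
    _ = z := by rw [this]; rfl
  have hTz : T z = -((κ * (‖z‖ / ‖y‖)) • ((A - 1) y)) := by
    have := eq_neg_of_add_eq_zero_left h
    exact this
  have hnorm1 : ‖z‖ ≤ ‖B τ‖ * ‖T z‖ := by
    calc ‖z‖ = ‖B τ (T z)‖ := by rw [hzeq]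
    _ ≤ ‖B τ‖ * ‖T z‖ := (B τ).le_opNorm _
  have hcoef : (0 : ℝ) ≤ κ * (‖z‖ / ‖y‖) := by positivity
  have hnorm2 : ‖T z‖ ≤ κ * (‖z‖ / ‖y‖) * (‖A - 1‖ * ‖y‖) := by
    rw [hTz, norm_neg, norm_smul, Real.norm_of_nonneg hcoef]
    exact mul_le_mul_of_nonneg_left ((A - 1).le_opNorm y) hcoef
  have hB0 : (0 : ℝ) ≤ ‖B τ‖ := norm_nonneg _
  have key : ‖z‖ ≤ ‖B τ‖ * κ * ‖A - 1‖ * ‖z‖ := by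
    have := le_trans hnorm1 (mul_le_mul_of_nonneg_left hnorm2 hB0)
    have heq : ‖B τ‖ * (κ * (‖z‖ / ‖y‖) * (‖A - 1‖ * ‖y‖))
        = ‖B τ‖ * κ * ‖A - 1‖ * ‖z‖ := by
      rw [show ‖B τ‖ * (κ * (‖z‖ / ‖y‖) * (‖A - 1‖ * ‖y‖))
          = ‖B τ‖ * κ * ‖A - 1‖ * (‖z‖ / ‖y‖ * ‖y‖) by ring,
        div_mul_cancel₀ _ hypos.ne']
    linarith [heq ▸ this]
  have hκ₁b : κ₁ * ‖B τ‖ ≤ 1 :=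
    le_trans (mul_le_mul_of_nonneg_left hBle hκ₁pos.le) hκ₁S
  have hprod : (κ₁ * ‖B τ‖) * (κ₂ * ‖A - 1‖) ≤ 1 := by
    have := mul_le_mul hκ₁b hκ₂A (mul_nonneg hκ₂pos.le hA1.le) zero_le_one
    linarith
  have h1 : 1 ≤ ‖B τ‖ * κ * ‖A - 1‖ := by nlinarith [key, hzpos]
  have hba : 0 < ‖B τ‖ * ‖A - 1‖ := by nlinarith [h1, hκ0, hB0, hA1.le, mul_nonneg hB0 hA1.le]
  have h2 : κ * (‖B τ‖ * ‖A - 1‖) < (κ₁ * κ₂) * (‖B τ‖ * ‖A - 1‖) :=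
    mul_lt_mul_of_pos_right hκ hba
  nlinarith [h1, h2, hprod]
end
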